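/- Let W be the Coxeter group of an E-GCM graph acting on V via the quasi-standard geometric representation, and let N_M(w) = {α ∈ Φ_M+ : w·α ∈ Φ_M−}. For w ∈ W and a generator s_i: if w·α_i is a positive root then N_M(ws_i) = s_i(N_M(w)) ⊔ (ℝα_i ∩ Φ_M+), a disjoint union; if w·α_i is a negative root then N_M(ws_i) = s_i(N_M(w) \ ℝα_i). -/

import Mathlib

/-!
Everything rests on the fact that every root is positive or negative. If `i` is not a right
descent of `w`, pick a right descent `t ≠ i` and strip from `w` a maximal alternating word in
`i, t`: `w = u · (⋯ s_i s_t)` (`k` letters) with neither `i` nor `t` a right descent of `u`. The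
`k + 1` letter alternating word inside `w s_i` is reduced, so `k + 1 ≤ m_ti`, and `(⋯ s_i s_t) α_i`
is a combination of `α_i, α_t` whose coefficients satisfy a Chebyshev-type recursion; they are
nonnegative up to index `m_ti`, by a sine closed form when `M_it M_ti = 4 cos² (π / m_ti)` and by a
growth estimate when `M_it M_ti ≥ 4`. Induction on length gives `w α_i ≥ 0`.

Consequently `s_i` permutes the positive roots outside `ℝ α_i`, whence
`N(w s_i) \ ℝ α_i = s_i (N(w) \ ℝ α_i)`; and `N(w) ∩ ℝ α_i` is `ℝ α_i ∩ Φ⁺` or empty according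
to the sign of `w α_i`, which is the opposite of the sign of `w s_i α_i = -w α_i`.
-/

open Real

/-- The quasi-standard reflection `s_i` as a linear endomorphism of `V = ℝⁿ` with basis of
simple roots `α_j = Pi.single j 1`: `s_i(v) = v − 2B(α_i,v)α_i` where `B(α_i,α_j) = M_ij/2`. -/
noncomputable def reflLin {n : ℕ} (M : Matrix (Fin n) (Fin n) ℝ) (i : Fin n) :
    Module.End ℝ (Fin n → ℝ) where
  toFun v := v - (∑ j, M i j * v j) • (Pi.single i 1 : Fin n → ℝ)
  map_add' v w := by
    ext t
    simp only [Pi.add_apply, Pi.sub_apply, Pi.smul_apply, smul_eq_mul, mul_add,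
      Finset.sum_add_distrib]
    ring
  map_smul' c v := by
    ext t
    simp only [Pi.smul_apply, Pi.sub_apply, smul_eq_mul, RingHom.id_apply]
    rw [show (∑ j, M i j * (c * v j)) = c * ∑ j, M i j * v j from by
      rw [Finset.mul_sum]; exact Finset.sum_congr rfl fun j _ => by ring]
    ring

/-- `M` is an E-generalized Cartan matrix whose amplitude products correspond to the
Coxeter matrix `K` (where `K i j = 0` encodes `m_ij = ∞`). -/
def IsEGCM {n : ℕ} (M : Matrix (Fin n) (Fin n) ℝ) (K : CoxeterMatrix (Fin n)) : Prop :=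
  (∀ i, M i i = 2) ∧ (∀ i j, i ≠ j → M i j ≤ 0) ∧ (∀ i j, M i j = 0 ↔ M j i = 0) ∧
  (∀ i j, i ≠ j →
    (K i j = 0 ∧ 4 ≤ M i j * M j i) ∨
    (2 ≤ K i j ∧ M i j * M j i = 4 * Real.cos (π / (K i j : ℝ)) ^ 2))

/-- The root system `Φ_M = {w·α_i}` of the quasi-standard geometric representation,
where the representation is given by `ρ`. -/
def Phi {n : ℕ} {W : Type*} [Group W] (ρ : W →* Module.End ℝ (Fin n → ℝ)) :
    Set (Fin n → ℝ) :=
  {v | ∃ (w : W) (i : Fin n), v = ρ w (Pi.single i 1)}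

/-- The positive roots: roots that are nonnegative combinations of the simple roots. -/
def PhiPlus {n : ℕ} {W : Type*} [Group W] (ρ : W →* Module.End ℝ (Fin n → ℝ)) :
    Set (Fin n → ℝ) :=
  {v | v ∈ Phi ρ ∧ ∀ j, 0 ≤ v j}

/-- The negative roots: roots that are nonpositive combinations of the simple roots. -/
def PhiMinus {n : ℕ} {W : Type*} [Group W] (ρ : W →* Module.End ℝ (Fin n → ℝ)) :
    Set (Fin n → ℝ) :=
  {v | v ∈ Phi ρ ∧ ∀ j, v j ≤ 0}

/-- The set of real scalar multiples of the simple root `α_i`. -/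
def multA {n : ℕ} (i : Fin n) : Set (Fin n → ℝ) :=
  {v | ∃ c : ℝ, v = c • (Pi.single i 1 : Fin n → ℝ)}

/-- `N_M(w)`: the set of positive roots sent by `w` to negative roots. -/
def NM {n : ℕ} {W : Type*} [Group W] (ρ : W →* Module.End ℝ (Fin n → ℝ)) (w : W) :
    Set (Fin n → ℝ) :=
  {v | v ∈ PhiPlus ρ ∧ ρ w v ∈ PhiMinus ρ}

section Reflection

variable {n : ℕ} (M : Matrix (Fin n) (Fin n) ℝ) {i : Fin n}

lemma reflLin_apply (v : Fin n → ℝ) :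
    reflLin M i v = v - (∑ j, M i j * v j) • (Pi.single i 1 : Fin n → ℝ) := rfl

lemma reflLin_apply_of_ne (v : Fin n → ℝ) {j : Fin n} (h : j ≠ i) :
    reflLin M i v j = v j := by
  simp [reflLin_apply, Pi.single_eq_of_ne h]

lemma reflLin_smul_single_add_smul_single (p t : Fin n) (x y : ℝ) :
    reflLin M i (x • Pi.single p 1 + y • Pi.single t 1) =
      x • Pi.single p 1 + y • Pi.single t 1 - (x * M i p + y * M i t) • Pi.single i 1 := by
  simp only [reflLin_apply, Pi.add_apply, Pi.smul_apply, smul_eq_mul, mul_add,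
    Finset.sum_add_distrib, Pi.single_apply, mul_ite, mul_one, mul_zero, Finset.sum_ite_eq',
    Finset.mem_univ, if_true]
  ring_nf

variable {M}

lemma reflLin_single_self (h : M i i = 2) :
    reflLin M i (Pi.single i 1) = -(Pi.single i 1 : Fin n → ℝ) := by
  ext j
  rcases eq_or_ne j i with rfl | hj <;> norm_num [reflLin_apply, Pi.single_apply, *]

lemma reflLin_reflLin (h : M i i = 2) (v : Fin n → ℝ) : reflLin M i (reflLin M i v) = v := by
  rw [reflLin_apply M v, map_sub, map_smul, reflLin_single_self h, reflLin_apply M v]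
  module

lemma reflLin_mem_multA_iff (h : M i i = 2) {v : Fin n → ℝ} :
    reflLin M i v ∈ multA i ↔ v ∈ multA i := by
  have hmaps : ∀ u, u ∈ multA i → reflLin M i u ∈ multA i := by
    rintro _ ⟨c, rfl⟩
    exact ⟨-c, by rw [map_smul, reflLin_single_self h, smul_neg, neg_smul]⟩
  exact ⟨fun hv => reflLin_reflLin h v ▸ hmaps _ hv, hmaps v⟩

end Reflection

/-- With `a = -M i t` and `b = -M t i`, two consecutive terms of this sequence are the coefficients
of `α_i, α_t` in the images of `α_i` under `s_t`, `s_i s_t`, `s_t s_i s_t`, …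
(see `apply_wordProd_alternatingWord_single`). -/
noncomputable def dihedralCoeff (a b : ℝ) : ℕ → ℝ
  | 0 => 0
  | 1 => 1
  | k + 2 => (if Even k then b else a) * dihedralCoeff a b (k + 1) - dihedralCoeff a b k

section Dihedral

variable {a b : ℝ}

lemma dihedralCoeff_add_two (a b : ℝ) (k : ℕ) :
    dihedralCoeff a b (k + 2) =
      (if Even k then b else a) * dihedralCoeff a b (k + 1) - dihedralCoeff a b k := rfl

lemma ite_even_mul_ite_even_add_one (a b : ℝ) (k : ℕ) :
    (if Even k then b else a) * (if Even (k + 1) then b else a) = a * b := by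
  by_cases hk : Even k <;> simp [hk, Nat.even_add_one, mul_comm]

lemma dihedralCoeff_nonneg_of_four_le (hb : 0 ≤ b) (hab : 4 ≤ a * b) (k : ℕ) :
    0 ≤ dihedralCoeff a b k := by
  have ha : 0 < a := pos_of_mul_pos_left (by linarith) hb
  have hb : 0 < b := pos_of_mul_pos_right (by linarith) ha.le
  -- the growth estimate propagates because consecutive multipliers have product `a * b ≥ 4`
  suffices h : ∀ k, 0 ≤ dihedralCoeff a b k ∧
      2 * dihedralCoeff a b k ≤ (if Even k then b else a) * dihedralCoeff a b (k + 1) from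
    (h k).1
  intro k
  induction k with
  | zero => simp [dihedralCoeff, hb.le]
  | succ k ih =>
    obtain ⟨h₀, h₁⟩ := ih
    have hc : 0 < (if Even k then b else a) := by split_ifs <;> assumption
    have hc' : 0 < (if Even (k + 1) then b else a) := by split_ifs <;> assumption
    have h₂ : 0 ≤ dihedralCoeff a b (k + 1) := nonneg_of_mul_nonneg_right (by linarith) hc
    refine ⟨h₂, ?_⟩
    rw [dihedralCoeff_add_two]
    nlinarith [mul_le_mul_of_nonneg_left h₁ hc'.le, mul_le_mul_of_nonneg_right hab h₂,
      ite_even_mul_ite_even_add_one a b k]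

lemma dihedralCoeff_mul_sin {θ : ℝ} (hcos : cos θ ≠ 0) (hab : a * b = 4 * cos θ ^ 2) (k : ℕ) :
    (Even k → dihedralCoeff a b k * sin (2 * θ) = b * sin (k * θ)) ∧
    (Odd k → dihedralCoeff a b k * sin θ = sin (k * θ)) := by
  induction k using Nat.twoStepInduction with
  | zero => simp [dihedralCoeff]
  | one => simp [dihedralCoeff]
  | more k ih₀ ih₁ =>
    have hsin : sin ((k + 2 : ℕ) * θ) = 2 * cos θ * sin ((k + 1 : ℕ) * θ) - sin (k * θ) := by
      have e₁ : ((k + 2 : ℕ) : ℝ) * θ = (k + 1 : ℕ) * θ + θ := by push_cast; ring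
      have e₂ : (k : ℝ) * θ = (k + 1 : ℕ) * θ - θ := by push_cast; ring
      rw [e₁, e₂, sin_add, sin_sub]
      ring
    rw [sin_two_mul] at ih₀ ih₁ ⊢
    rw [dihedralCoeff_add_two, hsin]
    rcases Nat.even_or_odd k with hk | hk
    · have h₀ := ih₀.1 hk
      have h₁ := ih₁.2 hk.add_one
      simp only [hk, if_true]
      refine ⟨fun _ => ?_, fun h => absurd h (Nat.not_odd_iff_even.2 (hk.add even_two))⟩
      linear_combination (2 * b * cos θ) * h₁ - h₀
    · have h₀ := ih₀.2 hk
      have h₁ := ih₁.1 hk.add_one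
      have h₁' : a * dihedralCoeff a b (k + 1) * sin θ = 2 * cos θ * sin ((k + 1 : ℕ) * θ) :=
        mul_left_cancel₀ (mul_ne_zero two_ne_zero hcos)
          (by linear_combination a * h₁ + sin ((k + 1 : ℕ) * θ) * hab)
      simp only [Nat.not_even_iff_odd.2 hk, if_false]
      refine ⟨fun h => absurd h (Nat.not_even_iff_odd.2 (hk.add_even even_two)), fun _ => ?_⟩
      linear_combination h₁' - h₀

lemma dihedralCoeff_nonneg_of_eq_cos_sq (hb : 0 ≤ b) {m : ℕ} (hm : 2 ≤ m)
    (hab : a * b = 4 * cos (π / m) ^ 2) {k : ℕ} (hk : k ≤ m) : 0 ≤ dihedralCoeff a b k := by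
  obtain rfl | hm : m = 2 ∨ 3 ≤ m := by omega
  · interval_cases k <;> simp [dihedralCoeff, hb]
  set θ := π / m with hθ
  have hm' : (3 : ℝ) ≤ m := by exact_mod_cast hm
  have hθ₀ : 0 < θ := by positivity
  have hθ₃ : θ ≤ π / 3 := div_le_div_of_nonneg_left pi_pos.le (by norm_num) hm'
  have hcos : 0 < cos θ := cos_pos_of_mem_Ioo ⟨by linarith [pi_pos], by linarith [pi_pos]⟩
  have hkθ : 0 ≤ sin (k * θ) := by
    refine sin_nonneg_of_nonneg_of_le_pi (by positivity) ?_
    calc (k : ℝ) * θ ≤ m * θ := by gcongr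
      _ = π := by rw [hθ]; field_simp
  obtain ⟨hev, hodd⟩ := dihedralCoeff_mul_sin hcos.ne' hab k
  rcases Nat.even_or_odd k with h | h
  · have h2θ : 0 < sin (2 * θ) := sin_pos_of_pos_of_lt_pi (by positivity) (by linarith [pi_pos])
    exact nonneg_of_mul_nonneg_left ((hev h).symm ▸ mul_nonneg hb hkθ) h2θ
  · have hθ' : 0 < sin θ := sin_pos_of_pos_of_lt_pi hθ₀ (by linarith [pi_pos])
    exact nonneg_of_mul_nonneg_left ((hodd h).symm ▸ hkθ) hθ'

end Dihedral

section Coxeter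

open CoxeterSystem

variable {B W : Type*} [Group W] {K : CoxeterMatrix B} (cs : CoxeterSystem K W)

lemma exists_eq_mul_wordProd_alternatingWord {w : W} {p q : B} (hq : cs.IsRightDescent w q) :
    ∃ (u : W) (k : ℕ), 1 ≤ k ∧ w = u * cs.wordProd (alternatingWord p q k) ∧
      cs.length w = cs.length u + k ∧ ¬ cs.IsRightDescent u p ∧ ¬ cs.IsRightDescent u q := by
  induction hN : cs.length w using Nat.strong_induction_on generalizing w p q with
  | _ N ih =>
  have hlen : cs.length (w * cs.simple q) + 1 = cs.length w := cs.isRightDescent_iff.mp hq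
  by_cases hp : cs.IsRightDescent (w * cs.simple q) p
  · obtain ⟨u, k, hk, hw, hl, huq, hup⟩ := ih _ (by omega) hp rfl
    refine ⟨u, k + 1, by omega, ?_, by omega, hup, huq⟩
    rw [alternatingWord_succ, cs.wordProd_concat, ← mul_assoc, ← hw,
      cs.simple_mul_simple_cancel_right]
  · refine ⟨w * cs.simple q, 1, le_rfl, ?_, by omega, hp,
      cs.isRightDescent_iff_not_isRightDescent_mul.mp hq⟩
    rw [show alternatingWord p q 1 = [q] from rfl, cs.wordProd_singleton,
      cs.simple_mul_simple_cancel_right]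

lemma isReduced_alternatingWord_succ {u : W} {p q : B} {k : ℕ}
    (hlen : cs.length (u * cs.wordProd (alternatingWord p q k)) = cs.length u + k)
    (hp : ¬ cs.IsRightDescent (u * cs.wordProd (alternatingWord p q k)) p) :
    cs.IsReduced (alternatingWord q p (k + 1)) := by
  have hsucc := cs.not_isRightDescent_iff.mp hp
  rw [mul_assoc, ← cs.wordProd_concat, ← alternatingWord_succ] at hsucc
  have hle := cs.length_wordProd_le (alternatingWord q p (k + 1))
  have hmul := cs.length_mul_le u (cs.wordProd (alternatingWord q p (k + 1)))
  rw [length_alternatingWord] at hle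
  rw [CoxeterSystem.IsReduced, length_alternatingWord]
  omega

lemma eq_zero_or_le_of_isReduced_alternatingWord {p q : B} {m : ℕ}
    (h : cs.IsReduced (alternatingWord p q m)) : K p q = 0 ∨ m ≤ K p q := by
  by_contra! hc
  exact cs.not_isReduced_alternatingWord p q hc.1 hc.2 h

end Coxeter

section Roots

variable {n : ℕ} {W : Type*} [Group W] {ρ : W →* Module.End ℝ (Fin n → ℝ)} {i : Fin n}

lemma apply_mem_Phi (u : W) {v : Fin n → ℝ} (hv : v ∈ Phi ρ) : ρ u v ∈ Phi ρ := by
  obtain ⟨w, i, rfl⟩ := hv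
  exact ⟨u * w, i, by rw [map_mul, Module.End.mul_apply]⟩

lemma ne_zero_of_mem_Phi {v : Fin n → ℝ} (hv : v ∈ Phi ρ) : v ≠ 0 := by
  obtain ⟨w, i, rfl⟩ := hv
  intro h
  have := congrArg (ρ w⁻¹) h
  rw [← Module.End.mul_apply, ← map_mul, inv_mul_cancel, map_one, Module.End.one_apply,
    map_zero] at this
  simpa using congrFun this i

lemma disjoint_PhiPlus_PhiMinus : Disjoint (PhiPlus ρ) (PhiMinus ρ) :=
  Set.disjoint_left.mpr fun _ hp hm =>
    ne_zero_of_mem_Phi hp.1 (funext fun j => le_antisymm (hm.2 j) (hp.2 j))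

lemma mem_multA_of_forall_ne_eq_zero {v : Fin n → ℝ} (h : ∀ j, j ≠ i → v j = 0) :
    v ∈ multA i :=
  ⟨v i, funext fun j => by rcases eq_or_ne j i with rfl | hj <;> simp [*]⟩

lemma mem_NM_iff_of_mem_multA {v : Fin n → ℝ} (hv : v ∈ multA i ∩ PhiPlus ρ) (w : W) :
    v ∈ NM ρ w ↔ ρ w (Pi.single i 1) ∈ PhiMinus ρ := by
  obtain ⟨⟨c, rfl⟩, hvΦ, hv₀⟩ := hv
  have hc : 0 < c := by
    refine (by simpa using hv₀ i : 0 ≤ c).lt_of_ne' fun hc => ne_zero_of_mem_Phi hvΦ ?_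
    rw [hc, zero_smul]
  have hcoord : ∀ j, ρ w (c • Pi.single i 1) j ≤ 0 ↔ ρ w (Pi.single i 1) j ≤ 0 := fun j => by
    rw [map_smul, Pi.smul_apply]
    exact smul_nonpos_iff_nonpos_of_pos_left hc
  exact ⟨fun h => ⟨⟨w, i, rfl⟩, fun j => (hcoord j).1 (h.2.2 j)⟩,
    fun h => ⟨⟨hvΦ, hv₀⟩, apply_mem_Phi w hvΦ, fun j => (hcoord j).2 (h.2 j)⟩⟩

lemma disjoint_NM_multA_of_mem_PhiPlus {w : W} (h : ρ w (Pi.single i 1) ∈ PhiPlus ρ) :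
    Disjoint (NM ρ w) (multA i) :=
  Set.disjoint_left.mpr fun _ hv hvi => Set.disjoint_left.mp disjoint_PhiPlus_PhiMinus h
    ((mem_NM_iff_of_mem_multA ⟨hvi, hv.1⟩ w).mp hv)

lemma NM_inter_multA_of_mem_PhiMinus {w : W} (h : ρ w (Pi.single i 1) ∈ PhiMinus ρ) :
    NM ρ w ∩ multA i = multA i ∩ PhiPlus ρ :=
  Set.ext fun _ => ⟨fun hv => ⟨hv.2, hv.1.1⟩,
    fun hv => ⟨(mem_NM_iff_of_mem_multA hv w).mpr h, hv.1⟩⟩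

end Roots

section Representation

open CoxeterSystem

variable {n : ℕ} {W : Type*} [Group W] {M : Matrix (Fin n) (Fin n) ℝ}
  {K : CoxeterMatrix (Fin n)} (cs : CoxeterSystem K W) {ρ : W →* Module.End ℝ (Fin n → ℝ)}

lemma apply_mul_simple (hρ : ∀ i, ρ (cs.simple i) = reflLin M i) (w : W) (i : Fin n)
    (v : Fin n → ℝ) : ρ (w * cs.simple i) v = ρ w (reflLin M i v) := by
  rw [map_mul, Module.End.mul_apply, hρ]

lemma apply_mul_simple_single_self (hρ : ∀ i, ρ (cs.simple i) = reflLin M i) {i : Fin n}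
    (hi : M i i = 2) (w : W) :
    ρ (w * cs.simple i) (Pi.single i 1) = -ρ w (Pi.single i 1) := by
  rw [apply_mul_simple cs hρ, reflLin_single_self hi, map_neg]

lemma apply_wordProd_alternatingWord_single (hρ : ∀ i, ρ (cs.simple i) = reflLin M i)
    {i t : Fin n} (hi : M i i = 2) (ht : M t t = 2) (k : ℕ) :
    ρ (cs.wordProd (alternatingWord i t k)) (Pi.single i 1) =
      if Even k then
        dihedralCoeff (-M i t) (-M t i) (k + 1) • Pi.single i 1 +
          dihedralCoeff (-M i t) (-M t i) k • Pi.single t 1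
      else
        dihedralCoeff (-M i t) (-M t i) k • Pi.single i 1 +
          dihedralCoeff (-M i t) (-M t i) (k + 1) • Pi.single t 1 := by
  induction k with
  | zero => simp [dihedralCoeff, alternatingWord]
  | succ k ih =>
    rw [alternatingWord_succ', cs.wordProd_cons, map_mul, Module.End.mul_apply, ih, hρ,
      dihedralCoeff_add_two]
    by_cases hk : Even k
    · simp only [hk, if_true, Nat.even_add_one, not_true_eq_false, if_false,
        reflLin_smul_single_add_smul_single, ht]
      module
    · simp only [hk, if_false, Nat.even_add_one, not_false_eq_true, if_true,
        reflLin_smul_single_add_smul_single, hi]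
      module

lemma IsEGCM.dihedralCoeff_nonneg (hMK : IsEGCM M K) {i t : Fin n} (hti : t ≠ i) {k : ℕ}
    (hk : K t i = 0 ∨ k ≤ K t i) : 0 ≤ dihedralCoeff (-M i t) (-M t i) k := by
  have hb : 0 ≤ -M t i := neg_nonneg.mpr (hMK.2.1 t i hti)
  have hab : -M i t * -M t i = M t i * M i t := by ring
  rcases hMK.2.2.2 t i hti with ⟨-, h4⟩ | ⟨hK, hcos⟩
  · exact dihedralCoeff_nonneg_of_four_le hb (hab ▸ h4) k
  · exact dihedralCoeff_nonneg_of_eq_cos_sq hb hK (hab ▸ hcos) (hk.resolve_left (by omega))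

theorem apply_single_nonneg_of_not_isRightDescent (hMK : IsEGCM M K)
    (hρ : ∀ i, ρ (cs.simple i) = reflLin M i) {w : W} {i : Fin n}
    (h : ¬ cs.IsRightDescent w i) (j : Fin n) : 0 ≤ ρ w (Pi.single i 1) j := by
  induction hN : cs.length w using Nat.strong_induction_on generalizing w i j with
  | _ N ih =>
  rcases eq_or_ne w 1 with rfl | hw
  · rw [map_one, Module.End.one_apply, Pi.single_apply]
    positivity
  obtain ⟨t, ht⟩ := cs.exists_rightDescent_of_ne_one hw
  have hti : t ≠ i := fun hit => h (hit ▸ ht)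
  obtain ⟨u, k, hk, rfl, hlen, hui, hut⟩ :=
    exists_eq_mul_wordProd_alternatingWord cs (p := i) ht
  have hK := eq_zero_or_le_of_isReduced_alternatingWord cs
    (isReduced_alternatingWord_succ cs hlen h)
  have he₀ := hMK.dihedralCoeff_nonneg hti (hK.imp_right (le_trans (Nat.le_succ k)))
  have he₁ := hMK.dihedralCoeff_nonneg hti hK
  have hαi := ih _ (by omega) hui j rfl
  have hαt := ih _ (by omega) hut j rfl
  rw [map_mul, Module.End.mul_apply,
    apply_wordProd_alternatingWord_single cs hρ (hMK.1 i) (hMK.1 t)]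
  split_ifs <;>
    simp only [map_add, map_smul, Pi.add_apply, Pi.smul_apply, smul_eq_mul] <;> positivity

theorem mem_PhiPlus_or_mem_PhiMinus (hMK : IsEGCM M K) (hρ : ∀ i, ρ (cs.simple i) = reflLin M i)
    {v : Fin n → ℝ} (hv : v ∈ Phi ρ) : v ∈ PhiPlus ρ ∨ v ∈ PhiMinus ρ := by
  obtain ⟨w, i, rfl⟩ := hv
  by_cases hd : cs.IsRightDescent w i
  · have hpos := apply_single_nonneg_of_not_isRightDescent cs hMK hρ
      (cs.isRightDescent_iff_not_isRightDescent_mul.mp hd)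
    rw [apply_mul_simple_single_self cs hρ (hMK.1 i)] at hpos
    exact Or.inr ⟨⟨w, i, rfl⟩, fun j => by simpa using hpos j⟩
  · exact Or.inl ⟨⟨w, i, rfl⟩, apply_single_nonneg_of_not_isRightDescent cs hMK hρ hd⟩

lemma apply_mul_simple_single_mem_PhiPlus_iff (hρ : ∀ i, ρ (cs.simple i) = reflLin M i)
    {i : Fin n} (hi : M i i = 2) (w : W) :
    ρ (w * cs.simple i) (Pi.single i 1) ∈ PhiPlus ρ ↔ ρ w (Pi.single i 1) ∈ PhiMinus ρ := by
  have hΦ : -ρ w (Pi.single i 1) ∈ Phi ρ :=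
    ⟨w * cs.simple i, i, (apply_mul_simple_single_self cs hρ hi w).symm⟩
  rw [apply_mul_simple_single_self cs hρ hi]
  simp [PhiPlus, PhiMinus, hΦ, show ρ w (Pi.single i 1) ∈ Phi ρ from ⟨w, i, rfl⟩]

lemma apply_mul_simple_single_mem_PhiMinus_iff (hρ : ∀ i, ρ (cs.simple i) = reflLin M i)
    {i : Fin n} (hi : M i i = 2) (w : W) :
    ρ (w * cs.simple i) (Pi.single i 1) ∈ PhiMinus ρ ↔ ρ w (Pi.single i 1) ∈ PhiPlus ρ := by
  rw [← apply_mul_simple_single_mem_PhiPlus_iff cs hρ hi, cs.simple_mul_simple_cancel_right]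

lemma reflLin_mem_PhiPlus (hMK : IsEGCM M K) (hρ : ∀ i, ρ (cs.simple i) = reflLin M i)
    {i : Fin n} {v : Fin n → ℝ} (hv : v ∈ PhiPlus ρ) (hvi : v ∉ multA i) :
    reflLin M i v ∈ PhiPlus ρ := by
  have hsv : reflLin M i v ∈ Phi ρ := hρ i ▸ apply_mem_Phi _ hv.1
  refine (mem_PhiPlus_or_mem_PhiMinus cs hMK hρ hsv).resolve_right fun hneg => hvi ?_
  refine mem_multA_of_forall_ne_eq_zero fun j hj => le_antisymm ?_ (hv.2 j)
  simpa [reflLin_apply_of_ne M v hj] using hneg.2 j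

lemma reflLin_mem_PhiPlus_diff_multA_iff (hMK : IsEGCM M K)
    (hρ : ∀ i, ρ (cs.simple i) = reflLin M i) {i : Fin n} {v : Fin n → ℝ} :
    reflLin M i v ∈ PhiPlus ρ \ multA i ↔ v ∈ PhiPlus ρ \ multA i := by
  have hmaps : ∀ u, u ∈ PhiPlus ρ \ multA i → reflLin M i u ∈ PhiPlus ρ \ multA i :=
    fun u hu => ⟨reflLin_mem_PhiPlus cs hMK hρ hu.1 hu.2,
      (reflLin_mem_multA_iff (hMK.1 i)).not.mpr hu.2⟩
  exact ⟨fun h => reflLin_reflLin (hMK.1 i) v ▸ hmaps _ h, hmaps v⟩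

theorem NM_mul_simple_diff_multA (hMK : IsEGCM M K) (hρ : ∀ i, ρ (cs.simple i) = reflLin M i)
    (w : W) (i : Fin n) :
    NM ρ (w * cs.simple i) \ multA i = reflLin M i '' (NM ρ w \ multA i) := by
  have hinv : Function.Involutive (reflLin M i) := reflLin_reflLin (hMK.1 i)
  rw [hinv.image_eq_preimage_symm]
  ext v
  have h := reflLin_mem_PhiPlus_diff_multA_iff cs hMK hρ (i := i) (v := v)
  simp only [Set.mem_sdiff, Set.mem_preimage, NM, Set.mem_ofPred_eq, apply_mul_simple cs hρ]
    at h ⊢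
  tauto

end Representation

/-- Behavior of `N_M` under right multiplication by a simple reflection: if `w·α_i` is a
positive root then `N_M(ws_i) = s_i(N_M(w)) ⊔ (ℝα_i ∩ Φ_M⁺)` (a disjoint union);
if `w·α_i` is a negative root then `N_M(ws_i) = s_i(N_M(w) \ ℝα_i)`. -/
theorem NM_mul_simple {n : ℕ} {W : Type*} [Group W]
    (M : Matrix (Fin n) (Fin n) ℝ) (K : CoxeterMatrix (Fin n)) (hMK : IsEGCM M K)
    (cs : CoxeterSystem K W)
    (ρ : W →* Module.End ℝ (Fin n → ℝ))
    (hρ : ∀ i, ρ (cs.simple i) = reflLin M i)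
    (w : W) (i : Fin n) :
    (ρ w (Pi.single i 1) ∈ PhiPlus ρ →
      NM ρ (w * cs.simple i) = (reflLin M i) '' (NM ρ w) ∪ (multA i ∩ PhiPlus ρ) ∧
      Disjoint ((reflLin M i) '' (NM ρ w)) (multA i ∩ PhiPlus ρ)) ∧
    (ρ w (Pi.single i 1) ∈ PhiMinus ρ →
      NM ρ (w * cs.simple i) = (reflLin M i) '' (NM ρ w \ multA i)) := by
  have hdiff := NM_mul_simple_diff_multA cs hMK hρ w i
  refine ⟨fun hpos => ?_, fun hneg => ?_⟩
  · have hw := disjoint_NM_multA_of_mem_PhiPlus hpos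
    have hws := NM_inter_multA_of_mem_PhiMinus
      ((apply_mul_simple_single_mem_PhiMinus_iff cs hρ (hMK.1 i) w).mpr hpos)
    rw [sdiff_eq_left.mpr hw] at hdiff
    rw [← Set.sdiff_union_inter (NM ρ (w * cs.simple i)) (multA i), hdiff, hws]
    refine ⟨rfl, Set.disjoint_left.mpr ?_⟩
    rintro _ ⟨u, hu, rfl⟩ hsu
    exact Set.disjoint_left.mp hw hu ((reflLin_mem_multA_iff (hMK.1 i)).mp hsu.1)
  · rw [← hdiff, sdiff_eq_left.mpr (disjoint_NM_multA_of_mem_PhiPlus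
      ((apply_mul_simple_single_mem_PhiPlus_iff cs hρ (hMK.1 i) w).mpr hneg))]
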